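/- arXiv:2203.08018 — 6 statements merged into one kernel-verified Lean document; each statement's English description precedes it below -/
import Mathlib

section
/- Let V be a commutative unital ring and 𝔪 an idempotent ideal. For every V-module M, the canonical map μ' : M → Hom_V(𝔪, M) sending x to (a ↦ ax) has kernel and cokernel that are both annihilated by 𝔪. -/
open TensorProduct

variable {V : Type*} [CommRing V]

/-- The canonical multiplication map `μ : 𝔪 ⊗[V] M → M`, `a ⊗ x ↦ a • x`. -/
noncomputable def smulMap (𝔪 : Ideal V) (M : Type*) [AddCommGroup M] [Module V M] :
    ↥𝔪 ⊗[V] M →ₗ[V] M :=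
  TensorProduct.lift ((LinearMap.lsmul V M).comp 𝔪.subtype)

/-- The canonical map `μ' : M → Hom_V(𝔪, M)`, `x ↦ (a ↦ a • x)`. -/
noncomputable def closedMap (𝔪 : Ideal V) (M : Type*) [AddCommGroup M] [Module V M] :
    M →ₗ[V] (↥𝔪 →ₗ[V] M) :=
  ((LinearMap.lsmul V M).comp 𝔪.subtype).flip

/-- For an idempotent ideal 𝔪 and any V-module M, the canonical map
μ' : M → Hom_V(𝔪, M) has kernel and cokernel annihilated by 𝔪. -/
theorem stmt2 {V : Type*} [CommRing V] (𝔪 : Ideal V) (hm : 𝔪 * 𝔪 = 𝔪)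
    (M : Type*) [AddCommGroup M] [Module V M] :
    (∀ a ∈ 𝔪, ∀ y ∈ LinearMap.ker (closedMap 𝔪 M), a • y = 0) ∧
    (∀ a ∈ 𝔪, ∀ z : (↥𝔪 →ₗ[V] M) ⧸ LinearMap.range (closedMap 𝔪 M), a • z = 0) := by
  constructor
  · intro a ha y hy
    have := LinearMap.congr_fun (LinearMap.mem_ker.mp hy) ⟨a, ha⟩
    simpa [closedMap] using this
  · intro a ha z
    obtain ⟨f, rfl⟩ := Submodule.Quotient.mk_surjective _ z
    rw [← Submodule.Quotient.mk_smul, Submodule.Quotient.mk_eq_zero]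
    refine ⟨f ⟨a, ha⟩, ?_⟩
    ext b
    simp only [closedMap, LinearMap.flip_apply, LinearMap.coe_comp, Function.comp_apply,
      Submodule.coe_subtype, LinearMap.lsmul_apply, LinearMap.smul_apply]
    rw [← f.map_smul, ← f.map_smul]
    congr 1
    ext
    simp [mul_comm]
end

section
/- Let V be a commutative unital ring, 𝔪 an idempotent ideal, and set 𝔪̃ = 𝔪 ⊗_V 𝔪. For any V-module M, the module 𝔪̃ ⊗_V M is firm, i.e. the canonical map 𝔪 ⊗_V (𝔪̃ ⊗_V M) → 𝔪̃ ⊗_V M given by multiplication is an isomorphism. -/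
open TensorProduct

variable {V : Type*} [CommRing V]

section aux

variable (𝔪 : Ideal V)

lemma smulMap_tmul (M : Type*) [AddCommGroup M] [Module V M] (a : ↥𝔪) (x : M) :
    smulMap 𝔪 M (a ⊗ₜ[V] x) = (a : V) • x := rfl

/-- Key identity: `d • t = (mult t) ⊗ d` in `𝔪 ⊗ 𝔪`. -/
lemma smul_eq_smulMap_tmul (t : ↥𝔪 ⊗[V] ↥𝔪) (d : ↥𝔪) :
    (d : V) • t = (smulMap 𝔪 ↥𝔪 t) ⊗ₜ[V] d := by
  induction t with
  | zero => simp
  | tmul a b =>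
      have h1 : ((d : V) • b) = (b : V) • d := Subtype.ext (mul_comm _ _)
      have h2 : ((b : V) • a) = (a : V) • b := Subtype.ext (mul_comm _ _)
      rw [smulMap_tmul, smul_tmul', smul_tmul, h1, ← smul_tmul, h2]
  | add x y hx hy =>
      rw [smul_add, map_add, add_tmul, hx, hy]

lemma smulMap_surjective (hm : 𝔪 * 𝔪 = 𝔪) :
    Function.Surjective (smulMap 𝔪 ↥𝔪) := by
  have h : 𝔪 ≤ Submodule.map 𝔪.subtype (LinearMap.range (smulMap 𝔪 ↥𝔪)) := by
    conv_lhs => rw [← hm]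
    rw [Ideal.mul_le]
    intro a ha b hb
    exact ⟨smulMap 𝔪 ↥𝔪 ((⟨a, ha⟩ : ↥𝔪) ⊗ₜ[V] ⟨b, hb⟩), ⟨_, rfl⟩, rfl⟩
  intro x
  obtain ⟨y, ⟨t, ht⟩, hy⟩ := h x.2
  exact ⟨t, by rw [ht]; exact Subtype.ext hy⟩

end aux

section main

variable (𝔪 : Ideal V) (M : Type*) [AddCommGroup M] [Module V M]

/-- Rearranging equivalence `𝔪 ⊗ ((𝔪 ⊗ 𝔪) ⊗ M) ≃ (𝔪 ⊗ 𝔪) ⊗ (𝔪 ⊗ M)`. -/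
noncomputable def eqE :
    (↥𝔪 ⊗[V] ((↥𝔪 ⊗[V] ↥𝔪) ⊗[V] M)) ≃ₗ[V] (↥𝔪 ⊗[V] ↥𝔪) ⊗[V] (↥𝔪 ⊗[V] M) :=
  (TensorProduct.assoc V ↥𝔪 (↥𝔪 ⊗[V] ↥𝔪) M).symm.trans
    ((TensorProduct.congr (TensorProduct.assoc V ↥𝔪 ↥𝔪 ↥𝔪).symm
        (LinearEquiv.refl V M)).trans
      (TensorProduct.assoc V (↥𝔪 ⊗[V] ↥𝔪) ↥𝔪 M))

lemma diagram :
    (TensorProduct.assoc V ↥𝔪 ↥𝔪 M).toLinearMap ∘ₗ smulMap 𝔪 ((↥𝔪 ⊗[V] ↥𝔪) ⊗[V] M)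
      = (LinearMap.rTensor (↥𝔪 ⊗[V] M) (smulMap 𝔪 ↥𝔪)) ∘ₗ (eqE 𝔪 M).toLinearMap := by
  apply TensorProduct.ext'
  intro a z
  induction z with
  | zero => simp
  | add u v hu hv => simp only [tmul_add, map_add, hu, hv]
  | tmul t x =>
      induction t with
      | zero => simp
      | add u v hu hv =>
          simp only [add_tmul, tmul_add, map_add, hu, hv]
      | tmul b c =>
          simp only [LinearMap.coe_comp, LinearEquiv.coe_coe, Function.comp_apply,
            smulMap_tmul, eqE, LinearEquiv.trans_apply, TensorProduct.assoc_symm_tmul,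
            TensorProduct.congr_tmul, LinearEquiv.refl_apply, LinearMap.rTensor_tmul,
            smul_tmul', TensorProduct.assoc_tmul]

lemma key (hm : 𝔪 * 𝔪 = 𝔪) :
    LinearMap.rTensor (↥𝔪 ⊗[V] M) (LinearMap.ker (smulMap 𝔪 ↥𝔪)).subtype = 0 := by
  apply TensorProduct.ext'
  intro k y
  rw [LinearMap.rTensor_tmul, LinearMap.zero_apply, Submodule.coe_subtype]
  have hk : smulMap 𝔪 ↥𝔪 (k : ↥𝔪 ⊗[V] ↥𝔪) = 0 := k.2
  induction y with
  | zero => rw [tmul_zero]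
  | add u v hu hv => rw [tmul_add, hu, hv, add_zero]
  | tmul c x =>
      obtain ⟨t, rfl⟩ := smulMap_surjective 𝔪 hm c
      induction t with
      | zero => simp
      | add u v hu hv => rw [map_add, add_tmul, tmul_add, hu, hv, add_zero]
      | tmul d e =>
          rw [smulMap_tmul, ← smul_tmul', tmul_smul, smul_tmul',
            smul_eq_smulMap_tmul, hk, zero_tmul, zero_tmul]

set_option synthInstance.maxHeartbeats 1000000 in
set_option maxHeartbeats 1000000 in
lemma rTensor_smulMap_bijective (hm : 𝔪 * 𝔪 = 𝔪) :
    Function.Bijective (LinearMap.rTensor (↥𝔪 ⊗[V] M) (smulMap 𝔪 ↥𝔪)) := by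
  have hsurj := smulMap_surjective 𝔪 hm
  have hex := @rTensor_exact V ↥(LinearMap.ker (smulMap 𝔪 ↥𝔪)) (↥𝔪 ⊗[V] ↥𝔪) ↥𝔪
    _ _ _ _ _ _ _ (LinearMap.ker (smulMap 𝔪 ↥𝔪)).subtype (smulMap 𝔪 ↥𝔪)
    (↥𝔪 ⊗[V] M) _ _ (LinearMap.exact_subtype_ker_map (smulMap 𝔪 ↥𝔪)) hsurj
  have hinj : Function.Injective
      (LinearMap.rTensor (↥𝔪 ⊗[V] M) (smulMap 𝔪 ↥𝔪)) := by
    intro y z hyz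
    have h0 : (LinearMap.rTensor (↥𝔪 ⊗[V] M) (smulMap 𝔪 ↥𝔪)) (y - z) = 0 := by
      rw [map_sub, hyz, sub_self]
    obtain ⟨x, hx⟩ := (hex _).mp h0
    rw [key 𝔪 M hm, LinearMap.zero_apply] at hx
    exact sub_eq_zero.mp hx.symm
  exact ⟨hinj, LinearMap.rTensor_surjective (↥𝔪 ⊗[V] M) hsurj⟩

end main

/-- For 𝔪 idempotent and 𝔪̃ = 𝔪 ⊗ 𝔪, the module 𝔪̃ ⊗_V M is firm:
the multiplication map 𝔪 ⊗_V (𝔪̃ ⊗_V M) → 𝔪̃ ⊗_V M is an isomorphism. -/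
theorem stmt4 {V : Type*} [CommRing V] (𝔪 : Ideal V) (hm : 𝔪 * 𝔪 = 𝔪)
    (M : Type*) [AddCommGroup M] [Module V M] :
    Function.Bijective (smulMap 𝔪 ((↥𝔪 ⊗[V] ↥𝔪) ⊗[V] M)) := by
  have hbij := rTensor_smulMap_bijective 𝔪 M hm
  have hcoe : ⇑(smulMap 𝔪 ((↥𝔪 ⊗[V] ↥𝔪) ⊗[V] M)) =
      ⇑(TensorProduct.assoc V ↥𝔪 ↥𝔪 M).symm ∘
        ⇑(LinearMap.rTensor (↥𝔪 ⊗[V] M) (smulMap 𝔪 ↥𝔪)) ∘ ⇑(eqE 𝔪 M) := by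
    funext z
    have hz := LinearMap.congr_fun (diagram 𝔪 M) z
    simp only [LinearMap.coe_comp, LinearEquiv.coe_coe, Function.comp_apply] at hz
    simp [← hz]
  rw [hcoe]
  exact ((TensorProduct.assoc V ↥𝔪 ↥𝔪 M).symm.bijective.comp hbij).comp
    (eqE 𝔪 M).bijective
end

section
/- Let V be a commutative unital ring with idempotent ideal 𝔪. An injective V-module Q is closed (the canonical map Q → Hom_V(𝔪, Q) is an isomorphism) if and only if Q has no nonzero elements annihilated by 𝔪, i.e. Hom_V(V/𝔪, Q) = 0. -/
open TensorProduct

variable {V : Type*} [CommRing V]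

/-- A module is almost zero if it is killed by 𝔪. -/
def AlmostZero (𝔪 : Ideal V) (N : Type*) [AddCommGroup N] [Module V N] : Prop :=
  ∀ a ∈ 𝔪, ∀ y : N, a • y = 0

/-!
A map `f : 𝔪 → Q` extends to `V → Q` by injectivity of `Q`, and the extension is multiplication
by its value at `1`. As `Module.Injective V Q` only quantifies over modules in the universe of `Q`,
the extension is done along `𝔪 ⧸ K → V ⧸ Ann(Q)` with `K = 𝔪 ∩ Ann(Q)`: the ring `V ⧸ Ann(Q)`
embeds into `End(Q)`, and `f` kills `K` because for `a ∈ K`, `b ∈ 𝔪` we have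
`b • f a = a • f b = 0`, so `f a` is killed by `𝔪`, hence zero.
-/

universe u v

theorem Module.Injective.exists_extension_of_small {R : Type u} [Ring R]
    {Q : Type v} [AddCommGroup Q] [Module R Q] (hQ : Module.Injective R Q)
    {X Y : Type*} [AddCommGroup X] [Module R X] [AddCommGroup Y] [Module R Y]
    [Small.{v} X] [Small.{v} Y] (i : X →ₗ[R] Y) (hi : Function.Injective i) (g : X →ₗ[R] Q) :
    ∃ h : Y →ₗ[R] Q, ∀ x, h (i x) = g x := by
  let eX := Shrink.linearEquiv R X
  let eY := Shrink.linearEquiv R Y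
  obtain ⟨h, hh⟩ := hQ.out (eY.symm.toLinearMap ∘ₗ i ∘ₗ eX.toLinearMap)
    (eY.symm.injective.comp (hi.comp eX.injective)) (g ∘ₗ eX.toLinearMap)
  exact ⟨h ∘ₗ eY.symm.toLinearMap, fun x ↦ by simpa [eX] using hh (eX.symm x)⟩

theorem small_quotient_annihilator {R : Type u} [Ring R] (Q : Type v) [AddCommGroup Q]
    [Module R Q] : Small.{v} (R ⧸ Module.annihilator R Q) :=
  small_of_injective (RingHom.kerLift_injective (Module.toAddMonoidEnd R Q))

@[simp]
theorem closedMap_apply (𝔪 : Ideal V) {M : Type*} [AddCommGroup M] [Module V M] (x : M)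
    (a : 𝔪) : closedMap 𝔪 M x a = (a : V) • x :=
  rfl

theorem injective_closedMap_iff (𝔪 : Ideal V) (M : Type*) [AddCommGroup M] [Module V M] :
    Function.Injective (closedMap 𝔪 M) ↔ ∀ x : M, (∀ a ∈ 𝔪, a • x = 0) → x = 0 := by
  simp only [injective_iff_map_eq_zero, LinearMap.ext_iff, closedMap_apply,
    LinearMap.zero_apply, Subtype.forall]

theorem comap_annihilator_le_ker {𝔪 : Ideal V} {M : Type*} [AddCommGroup M] [Module V M]
    (htf : ∀ x : M, (∀ a ∈ 𝔪, a • x = 0) → x = 0) (f : 𝔪 →ₗ[V] M) :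
    Submodule.comap 𝔪.subtype (Module.annihilator V M) ≤ LinearMap.ker f := by
  intro a ha
  refine htf _ fun b hb ↦ ?_
  have hba : b • a = (a : V) • (⟨b, hb⟩ : 𝔪) := Subtype.ext (mul_comm b a)
  rw [← map_smul, hba, map_smul]
  exact Module.mem_annihilator.mp ha _

theorem surjective_closedMap {𝔪 : Ideal V} {Q : Type*} [AddCommGroup Q] [Module V Q]
    (hQ : Module.Injective V Q) (htf : ∀ x : Q, (∀ a ∈ 𝔪, a • x = 0) → x = 0) :
    Function.Surjective (closedMap 𝔪 Q) := by
  intro f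
  set A := Module.annihilator V Q
  set K := Submodule.comap 𝔪.subtype A
  have hK : LinearMap.ker (A.mkQ ∘ₗ 𝔪.subtype) = K := by
    rw [LinearMap.ker_comp, Submodule.ker_mkQ]
  let i : (𝔪 ⧸ K) →ₗ[V] V ⧸ A := K.liftQ (A.mkQ ∘ₗ 𝔪.subtype) hK.ge
  have hi : Function.Injective i := by
    rw [← LinearMap.ker_eq_bot]
    exact Submodule.ker_liftQ_eq_bot _ _ _ hK.le
  have : Small.{_} (V ⧸ A) := small_quotient_annihilator Q
  have : Small.{_} (𝔪 ⧸ K) := small_of_injective hi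
  obtain ⟨h, hh⟩ :=
    hQ.exists_extension_of_small i hi (K.liftQ f (comap_annihilator_le_ker htf f))
  refine ⟨h (A.mkQ 1), LinearMap.ext fun a ↦ ?_⟩
  calc (a : V) • h (A.mkQ 1) = h (i (K.mkQ a)) := by
        rw [← map_smul, ← map_smul, smul_eq_mul, mul_one]; rfl
    _ = f a := hh _

theorem stmt6_general {V : Type*} [CommRing V] (𝔪 : Ideal V)
    (Q : Type*) [AddCommGroup Q] [Module V Q] (hQ : Module.Injective V Q) :
    Function.Bijective (closedMap 𝔪 Q) ↔ ∀ x : Q, (∀ a ∈ 𝔪, a • x = 0) → x = 0 :=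
  ⟨fun h ↦ (injective_closedMap_iff 𝔪 Q).mp h.1,
    fun htf ↦ ⟨(injective_closedMap_iff 𝔪 Q).mpr htf, surjective_closedMap hQ htf⟩⟩

/-- An injective V-module Q is closed iff it has no nonzero element killed by 𝔪
(i.e. Hom_V(V/𝔪, Q) = 0). -/
theorem stmt6 {V : Type*} [CommRing V] (𝔪 : Ideal V) (hm : 𝔪 * 𝔪 = 𝔪)
    (Q : Type*) [AddCommGroup Q] [Module V Q] (hQ : Module.Injective V Q) :
    Function.Bijective (closedMap 𝔪 Q) ↔ ∀ x : Q, (∀ a ∈ 𝔪, a • x = 0) → x = 0 :=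
  stmt6_general 𝔪 Q hQ
end

section
/- Let V be a commutative unital ring and 𝔪 an idempotent ideal. If a V-module M is firm (the multiplication map 𝔪 ⊗_V M → M is an isomorphism), then for every almost zero V-module N one has Hom_V(M, N) = 0 and Ext¹_V(M, N) = 0. -/
open TensorProduct

variable {V : Type*} [CommRing V]

/-- If M is firm then Hom_V(M,N) = 0 and Ext¹_V(M,N) = 0 for every almost zero N.
(Ext¹(M,N) = 0 is expressed by: every surjection onto M with almost zero kernel
-- i.e. with kernel isomorphic to an almost zero module N -- splits.) -/
theorem stmt7 {V : Type u} [CommRing V] (𝔪 : Ideal V) (hm : 𝔪 * 𝔪 = 𝔪)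
    (M : Type v) [AddCommGroup M] [Module V M]
    (hfirm : Function.Bijective (smulMap 𝔪 M)) :
    (∀ (N : Type v) [AddCommGroup N] [Module V N], AlmostZero 𝔪 N →
      ∀ f : M →ₗ[V] N, f = 0) ∧
    (∀ (E : Type v) [AddCommGroup E] [Module V E] (g : E →ₗ[V] M),
      Function.Surjective g → (∀ a ∈ 𝔪, ∀ y ∈ LinearMap.ker g, a • y = 0) →
      ∃ s : M →ₗ[V] E, g ∘ₗ s = LinearMap.id) := by

  constructor
  · intro N _ _ hN f
    ext x
    obtain ⟨t, rfl⟩ := hfirm.2 x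
    simp only [LinearMap.zero_apply]
    induction t using TensorProduct.induction_on with
    | zero => simp
    | tmul a m => simp [smulMap, hN a a.2]
    | add s t hs ht => simp [map_add, hs, ht]
  · intro E _ _ g hg hker
    obtain ⟨σ, hσ⟩ := hg.hasRightInverse
    have key : ∀ a ∈ 𝔪, ∀ e e' : E, g e = g e' → a • e = a • e' := by
      intro a ha e e' h
      have h0 : a • (e - e') = 0 := hker a ha _ (by simp [LinearMap.mem_ker, h])
      rw [smul_sub, sub_eq_zero] at h0
      exact h0
    let φ : ↥𝔪 →ₗ[V] (M →ₗ[V] E) :=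
      { toFun := fun a =>
          { toFun := fun x => (a : V) • σ x
            map_add' := fun x y => by
              show (a : V) • σ (x + y) = (a : V) • σ x + (a : V) • σ y
              rw [key a a.2 (σ (x + y)) (σ x + σ y) (by simp [hσ _]), smul_add]
            map_smul' := fun c x => by
              show (a : V) • σ (c • x) = c • ((a : V) • σ x)
              rw [key a a.2 (σ (c • x)) (c • σ x) (by simp [hσ _]), smul_comm] }
        map_add' := fun a b => by
          ext x
          show ((a + b : ↥𝔪) : V) • σ x = (a : V) • σ x + (b : V) • σ x
          rw [Submodule.coe_add, add_smul]
        map_smul' := fun c a => by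
          ext x
          show ((c • a : ↥𝔪) : V) • σ x = c • ((a : V) • σ x)
          rw [Submodule.coe_smul, smul_assoc] }
    let L := TensorProduct.lift φ
    have hgL : g ∘ₗ L = smulMap 𝔪 M := by
      ext a x
      simp [L, φ, smulMap, hσ x]
    let e := LinearEquiv.ofBijective (smulMap 𝔪 M) hfirm
    refine ⟨L ∘ₗ (e.symm : M →ₗ[V] ↥𝔪 ⊗[V] M), ?_⟩
    ext x
    show g (L (e.symm x)) = x
    rw [← LinearMap.comp_apply g L, hgL]
    exact e.apply_symm_apply x
end

section
/- Let V be a commutative unital ring and 𝔪 an idempotent ideal. If a V-module M satisfies Hom_V(M, N) = 0 = Ext¹_V(M, N) for every almost zero module N, then M is S-colocal: for every V-linear map f : N₁ → N₂ whose kernel and cokernel are almost zero, the induced map Hom_V(M, N₁) → Hom_V(M, N₂) is an isomorphism. -/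
open TensorProduct

variable {V : Type*} [CommRing V]

/-- If Hom_V(M,N) = 0 = Ext¹_V(M,N) for every almost zero N (the Ext¹ vanishing
being expressed by the lifting property along surjections with almost zero kernel),
then M is S-colocal: for every almost isomorphism f : N₁ → N₂ the induced map
Hom_V(M,N₁) → Hom_V(M,N₂) is an isomorphism. -/
theorem stmt8 {V : Type u} [CommRing V] (𝔪 : Ideal V) (hm : 𝔪 * 𝔪 = 𝔪)
    (M : Type u) [AddCommGroup M] [Module V M]
    (hhom : ∀ (N : Type u) [AddCommGroup N] [Module V N], AlmostZero 𝔪 N →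
      ∀ f : M →ₗ[V] N, f = 0)
    (hext : ∀ (E N : Type u) [AddCommGroup E] [Module V E] [AddCommGroup N] [Module V N]
      (g : E →ₗ[V] N), Function.Surjective g →
      (∀ a ∈ 𝔪, ∀ y ∈ LinearMap.ker g, a • y = 0) →
      ∀ h : M →ₗ[V] N, ∃ l : M →ₗ[V] E, g ∘ₗ l = h) :
    ∀ (N₁ N₂ : Type u) [AddCommGroup N₁] [Module V N₁] [AddCommGroup N₂] [Module V N₂]
      (f : N₁ →ₗ[V] N₂),
      (∀ a ∈ 𝔪, ∀ y ∈ LinearMap.ker f, a • y = 0) →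
      (∀ a ∈ 𝔪, ∀ z : N₂ ⧸ LinearMap.range f, a • z = 0) →
      Function.Bijective (fun φ : M →ₗ[V] N₁ => f ∘ₗ φ) := by
  intro N₁ N₂ _ _ _ _ f hker hcoker
  constructor
  · intro φ ψ h
    simp only at h
    have hsub : ∀ x : M, φ x - ψ x ∈ LinearMap.ker f := by
      intro x
      have hx := LinearMap.congr_fun h x
      simp only [LinearMap.comp_apply] at hx
      simp [LinearMap.mem_ker, map_sub, hx]
    let δ : M →ₗ[V] LinearMap.ker f :=
      LinearMap.codRestrict _ (φ - ψ) (fun x => hsub x)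
    have hz : AlmostZero 𝔪 (LinearMap.ker f) := by
      intro a ha y
      ext
      exact hker a ha y y.2
    have hδ := hhom _ hz δ
    ext x
    have := congrArg (fun g => ((g x : LinearMap.ker f) : N₁)) hδ
    simp only [δ, LinearMap.codRestrict_apply, LinearMap.sub_apply,
      LinearMap.zero_apply, ZeroMemClass.coe_zero] at this
    exact sub_eq_zero.mp this
  · intro ψ
    have hq : AlmostZero 𝔪 (N₂ ⧸ LinearMap.range f) := fun a ha z => hcoker a ha z
    have h0 := hhom _ hq ((LinearMap.range f).mkQ ∘ₗ ψ)
    have hmem : ∀ x, ψ x ∈ LinearMap.range f := by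
      intro x
      have hx := LinearMap.congr_fun h0 x
      simpa [Submodule.Quotient.mk_eq_zero] using hx
    obtain ⟨l, hl⟩ := hext N₁ (LinearMap.range f) f.rangeRestrict f.surjective_rangeRestrict
      (by
        intro a ha y hy
        have : f y = 0 := congrArg Subtype.val hy
        exact hker a ha y this)
      (LinearMap.codRestrict _ ψ hmem)
    refine ⟨l, ?_⟩
    ext x
    have := LinearMap.congr_fun hl x
    have := congrArg Subtype.val this
    simpa using this
end

section
/- Let V be a commutative unital ring and 𝔪 an idempotent ideal. If a V-module M is closed (M → Hom_V(𝔪, M) is an isomorphism), then Hom_V(N, M) = 0 and Ext¹_V(N, M) = 0 for every almost zero module N. -/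
open TensorProduct

variable {V : Type*} [CommRing V]

/-- If M is closed, then Hom_V(N,M) = 0 and Ext¹_V(N,M) = 0 for every almost zero N.
(Ext¹(N,M) = 0 is expressed by: every extension of an almost zero module by M splits,
i.e. every injection from M with almost zero cokernel admits a retraction.) -/
theorem stmt10 {V : Type u} [CommRing V] (𝔪 : Ideal V) (hm : 𝔪 * 𝔪 = 𝔪)
    (M : Type u) [AddCommGroup M] [Module V M]
    (hclosed : Function.Bijective (closedMap 𝔪 M)) :
    (∀ (N : Type u) [AddCommGroup N] [Module V N], AlmostZero 𝔪 N →
      ∀ f : N →ₗ[V] M, f = 0) ∧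
    (∀ (E : Type u) [AddCommGroup E] [Module V E] (j : M →ₗ[V] E),
      Function.Injective j →
      (∀ a ∈ 𝔪, ∀ z : E ⧸ LinearMap.range j, a • z = 0) →
      ∃ r : E →ₗ[V] M, r ∘ₗ j = LinearMap.id) := by
  have hinj := hclosed.injective
  constructor
  · intro N _ _ hN f
    ext x
    apply hinj
    ext a
    simp only [closedMap, LinearMap.flip_apply, LinearMap.comp_apply,
      Submodule.coe_subtype, LinearMap.lsmul_apply, LinearMap.zero_apply, map_zero]
    rw [← map_smul, hN a a.2 x, map_zero]
  · intro E _ _ j hj hq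
    have hmem : ∀ (e : E) (a : ↥𝔪), (a : V) • e ∈ LinearMap.range j := by
      intro e a
      rw [← Submodule.Quotient.mk_eq_zero, Submodule.Quotient.mk_smul]
      exact hq a a.2 _
    set ψ : E →ₗ[V] (↥𝔪 →ₗ[V] ↥(LinearMap.range j)) :=
      { toFun := fun e => LinearMap.codRestrict _ ((closedMap 𝔪 E) e) (fun a => hmem e a)
        map_add' := by
          intro x y; ext a
          simp only [closedMap, LinearMap.codRestrict_apply, LinearMap.add_apply,
            Submodule.coe_add, LinearMap.flip_apply, LinearMap.comp_apply,
            Submodule.coe_subtype, LinearMap.lsmul_apply]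
          exact smul_add _ _ _
        map_smul' := by
          intro c x; ext a
          simp only [closedMap, LinearMap.codRestrict_apply, RingHom.id_apply,
            LinearMap.smul_apply, SetLike.val_smul, LinearMap.flip_apply,
            LinearMap.comp_apply, Submodule.coe_subtype, LinearMap.lsmul_apply]
          exact smul_comm _ _ _ } with hψ
    refine ⟨(LinearEquiv.ofBijective (closedMap 𝔪 M) hclosed).symm.toLinearMap ∘ₗ
      (LinearMap.llcomp V ↥𝔪 ↥(LinearMap.range j) M
      (LinearEquiv.ofInjective j hj).symm.toLinearMap) ∘ₗ ψ, ?_⟩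
    ext m
    simp only [LinearMap.comp_apply, LinearMap.id_apply, LinearEquiv.coe_coe]
    rw [LinearEquiv.symm_apply_eq]
    ext a
    simp only [hψ, LinearMap.coe_mk, AddHom.coe_mk, LinearMap.llcomp_apply,
      LinearEquiv.coe_coe, LinearEquiv.ofBijective_apply]
    rw [LinearEquiv.symm_apply_eq]
    apply Subtype.ext
    simp only [closedMap, LinearMap.codRestrict_apply, LinearEquiv.ofInjective_apply,
      LinearMap.flip_apply, LinearMap.comp_apply, Submodule.coe_subtype,
      LinearMap.lsmul_apply, map_smul, SetLike.val_smul]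
end
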